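/- arXiv:1708.02131 — 7 statements merged into one kernel-verified Lean document; each statement's English description precedes it below -/
import Mathlib

section
/- Let λ and λₙ be C² positive functions on [0,∞) with value > 1 at 0 and convex logarithms, with λₙ(μ) ≥ λₙ₊₁(μ) ≥ λ(μ) for all n, μ and λₙ → λ pointwise. Set Φ(μ) = ln λ(μ)/μ, c* = inf_{μ>0} Φ(μ), cₙ* = inf_{μ>0} ln λₙ(μ)/μ. If c* < lim_{μ→∞} Φ(μ), then cₙ* → c* as n → ∞. -/
open Set Filter

theorem stmt_9 (l : ℝ → ℝ) (ln : ℕ → ℝ → ℝ) (L : EReal)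
    (hC2 : ContDiffOn ℝ 2 l (Ici 0))
    (hC2n : ∀ n, ContDiffOn ℝ 2 (ln n) (Ici 0))
    (hpos : ∀ μ ∈ Ici (0:ℝ), 0 < l μ)
    (hposn : ∀ n, ∀ μ ∈ Ici (0:ℝ), 0 < ln n μ)
    (h0 : 1 < l 0)
    (h0n : ∀ n, 1 < ln n 0)
    (hconv : ConvexOn ℝ (Ici 0) (fun μ => Real.log (l μ)))
    (hconvn : ∀ n, ConvexOn ℝ (Ici 0) (fun μ => Real.log (ln n μ)))
    (hmono : ∀ n, ∀ μ ∈ Ici (0:ℝ), ln (n + 1) μ ≤ ln n μ)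
    (hge : ∀ n, ∀ μ ∈ Ici (0:ℝ), l μ ≤ ln n μ)
    (hptwise : ∀ μ ∈ Ici (0:ℝ), Tendsto (fun n => ln n μ) atTop (nhds (l μ)))
    (hPhiInfty : Tendsto (fun μ => ((Real.log (l μ) / μ : ℝ) : EReal)) atTop (nhds L))
    (hlt : ((sInf ((fun μ => Real.log (l μ) / μ) '' Ioi 0) : ℝ) : EReal) < L) :
    Tendsto (fun n => sInf ((fun μ => Real.log (ln n μ) / μ) '' Ioi 0)) atTop
      (nhds (sInf ((fun μ => Real.log (l μ) / μ) '' Ioi 0))) := by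
  set f : ℝ → ℝ := fun μ => Real.log (l μ) with hf
  -- continuity of l at 0 within Ici 0 gives δ > 0 with l > 1 on [0, δ]
  have hlcont : ContinuousWithinAt l (Ici 0) 0 :=
    hC2.continuousOn.continuousWithinAt Set.self_mem_Ici
  have hev : ∀ᶠ μ in nhdsWithin 0 (Ici 0), 1 < l μ :=
    hlcont.eventually (eventually_gt_nhds h0)
  obtain ⟨ε, hε, hball⟩ := Metric.mem_nhdsWithin_iff.1 hev
  set δ : ℝ := ε / 2 with hδ
  have hδ0 : 0 < δ := by positivity
  have hδmem : ∀ μ : ℝ, 0 ≤ μ → μ ≤ δ → 1 < l μ := by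
    intro μ h1 h2
    apply hball
    constructor
    · simp only [Metric.mem_ball, Real.dist_eq, sub_zero, abs_of_nonneg h1]
      linarith
    · exact h1
  -- lower bound B for f μ / μ over μ > 0
  set B : ℝ := min 0 ((f δ - f 0) / δ) with hB
  have hf0 : 0 < f 0 := Real.log_pos h0
  have lb : ∀ μ ∈ Ioi (0:ℝ), B ≤ f μ / μ := by
    intro μ hμ
    simp only [Set.mem_Ioi] at hμ
    rcases le_or_gt μ δ with hle | hgt
    · have : 0 < f μ := Real.log_pos (hδmem μ hμ.le hle)
      have : 0 < f μ / μ := div_pos this hμ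
      exact le_trans (min_le_left _ _) this.le
    · have hsec : (f δ - f 0) / (δ - 0) ≤ (f μ - f 0) / (μ - 0) :=
        hconv.secant_mono Set.self_mem_Ici (le_of_lt hδ0) (le_of_lt (hδ0.trans hgt))
          (ne_of_gt hδ0) (ne_of_gt (hδ0.trans hgt)) hgt.le
      rw [sub_zero, sub_zero] at hsec
      have h1 : (f μ - f 0) / μ = f μ / μ - f 0 / μ := sub_div _ _ _
      have h2 : 0 < f 0 / μ := div_pos hf0 hμ
      have := min_le_right (0:ℝ) ((f δ - f 0) / δ)
      rw [← hB] at this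
      linarith
  -- Φₙ ≥ Φ pointwise on Ioi 0
  have hΦle : ∀ n, ∀ μ ∈ Ioi (0:ℝ), f μ / μ ≤ Real.log (ln n μ) / μ := by
    intro n μ hμ
    simp only [Set.mem_Ioi] at hμ
    have : f μ ≤ Real.log (ln n μ) :=
      Real.log_le_log (hpos μ hμ.le) (hge n μ hμ.le)
    exact div_le_div_of_nonneg_right this hμ.le
  set S : Set ℝ := (fun μ => Real.log (l μ) / μ) '' Ioi 0 with hS
  have hSne : S.Nonempty := ⟨Real.log (l 1) / 1, ⟨1, by norm_num, rfl⟩⟩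
  have hSbdd : BddBelow S := by
    refine ⟨B, ?_⟩
    rintro y ⟨μ, hμ, rfl⟩
    exact lb μ hμ
  have hSnbdd : ∀ n, BddBelow ((fun μ => Real.log (ln n μ) / μ) '' Ioi 0) := by
    intro n
    refine ⟨B, ?_⟩
    rintro y ⟨μ, hμ, rfl⟩
    exact (lb μ hμ).trans (hΦle n μ hμ)
  have hSnne : ∀ n, ((fun μ => Real.log (ln n μ) / μ) '' Ioi 0).Nonempty := by
    intro n
    exact ⟨Real.log (ln n 1) / 1, ⟨1, by norm_num, rfl⟩⟩
  have hcle : ∀ n, sInf S ≤ sInf ((fun μ => Real.log (ln n μ) / μ) '' Ioi 0) := by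
    intro n
    apply le_csInf (hSnne n)
    rintro y ⟨μ, hμ, rfl⟩
    exact (csInf_le hSbdd ⟨μ, hμ, rfl⟩).trans (hΦle n μ hμ)
  rw [tendsto_order]
  constructor
  · intro a ha
    exact Filter.Eventually.of_forall fun n => lt_of_lt_of_le ha (hcle n)
  · intro b hb
    obtain ⟨y, hyS, hyb⟩ := exists_lt_of_csInf_lt hSne hb
    obtain ⟨μ₀, hμ₀, rfl⟩ := hyS
    simp only [Set.mem_Ioi] at hμ₀
    have hlpos : l μ₀ ≠ 0 := ne_of_gt (hpos μ₀ hμ₀.le)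
    have htend : Tendsto (fun n => Real.log (ln n μ₀) / μ₀) atTop
        (nhds (Real.log (l μ₀) / μ₀)) :=
      ((hptwise μ₀ hμ₀.le).log hlpos).div_const _
    have hev2 : ∀ᶠ n in atTop, Real.log (ln n μ₀) / μ₀ < b :=
      htend.eventually (eventually_lt_nhds hyb)
    filter_upwards [hev2] with n hn
    exact lt_of_le_of_lt (csInf_le (hSnbdd n) ⟨μ₀, hμ₀, rfl⟩) hn
end

section
/- Let λ and λₙ be C² positive functions on [0,∞) with value > 1 at 0 and convex logarithms, with λₙ(μ) ≥ λₙ₊₁(μ) ≥ λ(μ) for all n, μ and λₙ → λ pointwise. If inf_{μ>0} ln λ(μ)/μ = lim_{μ→∞} ln λ(μ)/μ, then cₙ* := inf_{μ>0} ln λₙ(μ)/μ converges to c* := inf_{μ>0} ln λ(μ)/μ. -/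
/-! Since `λ ≤ λₙ` we have `c* ≤ cₙ*`, and for every `μ₀ > 0` pointwise convergence
gives `limsup cₙ* ≤ ln λ(μ₀)/μ₀`, hence `limsup cₙ* ≤ c*`. The only thing to check is that `c*`
is finite, i.e. that `ln λ(μ)/μ` is bounded below on `(0, ∞)`: near `0` it is positive because
`ln λ(0) > 0`, and beyond any `δ > 0` convexity bounds it below by the secant slope on `[0, δ]`. -/

open Set Filter Topology

theorem tendsto_csInf_image_of_le_of_tendsto {ι α β : Type*} [ConditionallyCompleteLinearOrder β]
    [TopologicalSpace β] [OrderTopology β] {L : Filter ι} {S : Set α} {F : α → β}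
    {G : ι → α → β} (hS : S.Nonempty) (hbdd : BddBelow (F '' S))
    (hle : ∀ i, ∀ x ∈ S, F x ≤ G i x) (hlim : ∀ x ∈ S, Tendsto (fun i => G i x) L (𝓝 (F x))) :
    Tendsto (fun i => sInf (G i '' S)) L (𝓝 (sInf (F '' S))) := by
  refine tendsto_order.2 ⟨fun a ha => Eventually.of_forall fun i => ?_, fun a ha => ?_⟩
  · refine ha.trans_le (le_csInf (hS.image _) ?_)
    rintro _ ⟨x, hx, rfl⟩
    exact (csInf_le hbdd ⟨x, hx, rfl⟩).trans (hle i x hx)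
  · obtain ⟨_, ⟨x, hx, rfl⟩, hxa⟩ := exists_lt_of_csInf_lt (hS.image _) ha
    filter_upwards [(hlim x hx).eventually_lt_const hxa] with i hi
    obtain ⟨b, hb⟩ := hbdd
    have hbddi : BddBelow (G i '' S) := by
      refine ⟨b, ?_⟩
      rintro _ ⟨y, hy, rfl⟩
      exact (hb ⟨y, hy, rfl⟩).trans (hle i y hy)
    exact (csInf_le hbddi ⟨x, hx, rfl⟩).trans_lt hi

theorem ConvexOn.bddBelow_image_div_Ioi {g : ℝ → ℝ} (hconv : ConvexOn ℝ (Ici 0) g)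
    (hcont : ContinuousWithinAt g (Ici 0) 0) (hg0 : 0 < g 0) :
    BddBelow ((fun μ => g μ / μ) '' Ioi 0) := by
  obtain ⟨δ, hδ, hgpos⟩ : ∃ δ, 0 < δ ∧ Icc 0 δ ⊆ {μ | 0 < g μ} :=
    mem_nhdsGE_iff_exists_Icc_subset.1 (hcont.eventually (eventually_gt_nhds hg0))
  refine ⟨min 0 ((g δ - g 0) / δ), ?_⟩
  rintro _ ⟨μ, hμ : 0 < μ, rfl⟩
  rcases le_or_gt μ δ with hμδ | hδμ
  · exact (min_le_left _ _).trans (div_pos (hgpos ⟨hμ.le, hμδ⟩) hμ).le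
  · have hsecant := hconv.secant_mono_aux2 self_mem_Ici (mem_Ici.2 hμ.le) hδ hδμ
    simp only [sub_zero] at hsecant
    calc min 0 ((g δ - g 0) / δ) ≤ (g μ - g 0) / μ := (min_le_right _ _).trans hsecant
      _ ≤ g μ / μ := by gcongr; linarith

theorem stmt_10_general (l : ℝ → ℝ) (ln : ℕ → ℝ → ℝ)
    (hC2 : ContDiffOn ℝ 2 l (Ici 0))
    (hpos : ∀ μ ∈ Ici (0:ℝ), 0 < l μ)
    (h0 : 1 < l 0)
    (hconv : ConvexOn ℝ (Ici 0) (fun μ => Real.log (l μ)))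
    (hge : ∀ n, ∀ μ ∈ Ici (0:ℝ), l μ ≤ ln n μ)
    (hptwise : ∀ μ ∈ Ici (0:ℝ), Tendsto (fun n => ln n μ) atTop (nhds (l μ))) :
    Tendsto (fun n => sInf ((fun μ => Real.log (ln n μ) / μ) '' Ioi 0)) atTop
      (nhds (sInf ((fun μ => Real.log (l μ) / μ) '' Ioi 0))) := by
  have hcont : ContinuousWithinAt (fun μ => Real.log (l μ)) (Ici 0) 0 :=
    (hC2.continuousOn.continuousWithinAt self_mem_Ici).log (hpos 0 self_mem_Ici).ne'
  refine tendsto_csInf_image_of_le_of_tendsto nonempty_Ioi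
    (hconv.bddBelow_image_div_Ioi hcont (Real.log_pos h0)) (fun n μ hμ => ?_) (fun μ hμ => ?_)
  · replace hμ := Ioi_subset_Ici_self hμ
    gcongr
    exacts [hpos μ hμ, hge n μ hμ]
  · replace hμ := Ioi_subset_Ici_self hμ
    exact ((hptwise μ hμ).log (hpos μ hμ).ne').div_const μ

theorem stmt_10 (l : ℝ → ℝ) (ln : ℕ → ℝ → ℝ)
    (hC2 : ContDiffOn ℝ 2 l (Ici 0))
    (hC2n : ∀ n, ContDiffOn ℝ 2 (ln n) (Ici 0))
    (hpos : ∀ μ ∈ Ici (0:ℝ), 0 < l μ)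
    (hposn : ∀ n, ∀ μ ∈ Ici (0:ℝ), 0 < ln n μ)
    (h0 : 1 < l 0)
    (h0n : ∀ n, 1 < ln n 0)
    (hconv : ConvexOn ℝ (Ici 0) (fun μ => Real.log (l μ)))
    (hconvn : ∀ n, ConvexOn ℝ (Ici 0) (fun μ => Real.log (ln n μ)))
    (hmono : ∀ n, ∀ μ ∈ Ici (0:ℝ), ln (n + 1) μ ≤ ln n μ)
    (hge : ∀ n, ∀ μ ∈ Ici (0:ℝ), l μ ≤ ln n μ)
    (hptwise : ∀ μ ∈ Ici (0:ℝ), Tendsto (fun n => ln n μ) atTop (nhds (l μ)))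
    (hinf : Tendsto (fun μ => Real.log (l μ) / μ) atTop
      (nhds (sInf ((fun μ => Real.log (l μ) / μ) '' Ioi 0)))) :
    Tendsto (fun n => sInf ((fun μ => Real.log (ln n μ) / μ) '' Ioi 0)) atTop
      (nhds (sInf ((fun μ => Real.log (l μ) / μ) '' Ioi 0))) :=
  stmt_10_general l ln hC2 hpos h0 hconv hge hptwise
end

section
/- Let λ and λₙ be C² positive functions on [0,∞) with value > 1 at 0 and convex logarithms, with λₙ(μ) ≤ λₙ₊₁(μ) ≤ λ(μ) for all n, μ, λₙ → λ pointwise, and λₙ' → λ' pointwise. If inf_{μ>0} ln λ(μ)/μ = lim_{μ→∞} ln λ(μ)/μ (finite), then cₙ* := inf_{μ>0} ln λₙ(μ)/μ converges to c* := inf_{μ>0} ln λ(μ)/μ. -/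
/-!
Write `c` for the infimum of `log λ(μ) / μ` and fix `b < c`. The functions
`Hₙ(μ) = log λₙ(μ) - b μ` are convex, increase in `n`, and converge to a limit that is positive
on `[0, ∞)` and exceeds its value at `0` at some `T > 0`. By a Dini-type compactness argument
`Hₙ > 0` on `[0, T]` for large `n`, and convexity propagates `Hₙ(0) < Hₙ(T)` to
`Hₙ(T) ≤ Hₙ(μ)` for `μ ≥ T`. Hence `b ≤ cₙ ≤ c` eventually. The infima are genuine (`sInf` of
a set unbounded below is `0`) because convexity and `log λ₀(0) > 0` give all `log λₙ` and
`log λ` a common linear minorant on `(0, ∞)`.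
-/

open Set Filter Topology

noncomputable def infSlope (G : ℝ → ℝ) : ℝ :=
  sInf ((fun μ => G μ / μ) '' Ioi 0)

section infSlope

variable {G G' : ℝ → ℝ} {a : ℝ}

theorem le_infSlope_iff (hG : ∃ B, ∀ μ > 0, B * μ ≤ G μ) :
    a ≤ infSlope G ↔ ∀ μ > 0, a * μ ≤ G μ := by
  obtain ⟨B, hB⟩ := hG
  have hbdd : BddBelow ((fun μ => G μ / μ) '' Ioi 0) := by
    refine ⟨B, ?_⟩
    rintro _ ⟨μ, hμ, rfl⟩
    exact (le_div_iff₀ hμ).2 (hB μ hμ)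
  rw [infSlope, le_csInf_iff hbdd ⟨_, mem_image_of_mem _ (mem_Ioi.2 one_pos)⟩]
  refine ⟨fun h μ hμ => (le_div_iff₀ hμ).1 (h _ (mem_image_of_mem _ hμ)), ?_⟩
  rintro h _ ⟨μ, hμ, rfl⟩
  exact (le_div_iff₀ hμ).2 (h μ hμ)

theorem infSlope_mul_le (hG : ∃ B, ∀ μ > 0, B * μ ≤ G μ) {μ : ℝ} (hμ : 0 < μ) :
    infSlope G * μ ≤ G μ :=
  (le_infSlope_iff hG).1 le_rfl μ hμ

theorem infSlope_mono (hG : ∃ B, ∀ μ > 0, B * μ ≤ G μ) (hGG' : ∀ μ > 0, G μ ≤ G' μ) :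
    infSlope G ≤ infSlope G' := by
  have hG' : ∃ B, ∀ μ > 0, B * μ ≤ G' μ :=
    hG.imp fun B hB μ hμ => (hB μ hμ).trans (hGG' μ hμ)
  exact (le_infSlope_iff hG').2 fun μ hμ => (infSlope_mul_le hG hμ).trans (hGG' μ hμ)

end infSlope

/-- Near `0` the function is positive by continuity; beyond, the secant slope from `0` is
monotone, so it bounds `G μ / μ` from below. -/
theorem ConvexOn.exists_forall_mul_le {G : ℝ → ℝ} (hconv : ConvexOn ℝ (Ici 0) G)
    (hcont : ContinuousWithinAt G (Ici 0) 0) (hG0 : 0 < G 0) :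
    ∃ B, ∀ μ > 0, B * μ ≤ G μ := by
  obtain ⟨δ, hδ, hpos⟩ := mem_nhdsGE_iff_exists_Icc_subset.1 (hcont.eventually_const_lt hG0)
  refine ⟨min 0 ((G δ - G 0) / δ), fun μ hμ => ?_⟩
  rcases le_total μ δ with hμδ | hδμ
  · exact (mul_nonpos_of_nonpos_of_nonneg (min_le_left _ _) hμ.le).trans (hpos ⟨hμ.le, hμδ⟩).le
  · have hsecant := hconv.secant_mono (a := 0) self_mem_Ici hδ.le hμ.le hδ.ne' hμ.ne' hδμ
    rw [sub_zero, sub_zero, le_div_iff₀ hμ] at hsecant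
    calc min 0 ((G δ - G 0) / δ) * μ ≤ (G δ - G 0) / δ * μ := by gcongr; exact min_le_right _ _
      _ ≤ G μ := by linarith

theorem IsCompact.eventually_forall_pos_of_monotone {X : Type*} [TopologicalSpace X] {K : Set X}
    (hK : IsCompact K) {F : ℕ → X → ℝ} (hcont : ∀ n, ContinuousOn (F n) K)
    (hmono : ∀ x ∈ K, Monotone (F · x)) (hpos : ∀ x ∈ K, ∃ n, 0 < F n x) :
    ∀ᶠ n in atTop, ∀ x ∈ K, 0 < F n x := by
  refine hK.induction_on (p := fun s => ∀ᶠ n in atTop, ∀ x ∈ s, 0 < F n x)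
    (by simp) (fun s t hst ht => ht.mono fun n hn x hx => hn x (hst hx))
    (fun s t hs ht => (hs.and ht).mono fun n hn x hx => hx.elim (hn.1 x) (hn.2 x))
    fun x hx => ?_
  obtain ⟨m, hm⟩ := hpos x hx
  refine ⟨{y ∈ K | 0 < F m y}, inter_mem self_mem_nhdsWithin
    ((hcont m x hx).eventually_const_lt hm), ?_⟩
  filter_upwards [eventually_ge_atTop m] with n hn y hy
  exact hy.2.trans_le (hmono y hy.1 hn)

theorem ConvexOn.eventually_forall_pos_of_monotone {H : ℕ → ℝ → ℝ} {h : ℝ → ℝ} {T : ℝ}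
    (hconv : ∀ n, ConvexOn ℝ (Ici 0) (H n)) (hcont : ∀ n, ContinuousOn (H n) (Ici 0))
    (hmono : ∀ μ ∈ Ici (0:ℝ), Monotone (H · μ))
    (hlim : ∀ μ ∈ Ici (0:ℝ), Tendsto (H · μ) atTop (𝓝 (h μ)))
    (hpos : ∀ μ ∈ Ici (0:ℝ), 0 < h μ) (hT : 0 < T) (hgrowth : h 0 < h T) :
    ∀ᶠ n in atTop, ∀ μ ∈ Ici (0:ℝ), 0 < H n μ := by
  have hIcc : Icc 0 T ⊆ Ici 0 := Icc_subset_Ici_self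
  have hcompact : ∀ᶠ n in atTop, ∀ μ ∈ Icc 0 T, 0 < H n μ :=
    isCompact_Icc.eventually_forall_pos_of_monotone (fun n => (hcont n).mono hIcc)
      (fun μ hμ => hmono μ (hIcc hμ))
      fun μ hμ => ((hlim μ (hIcc hμ)).eventually_const_lt (hpos μ (hIcc hμ))).exists
  have hincr : ∀ᶠ n in atTop, H n 0 < H n T :=
    ((hlim T hT.le).sub (hlim 0 self_mem_Ici)).eventually_const_lt (sub_pos.2 hgrowth)
      |>.mono fun n hn => sub_pos.1 hn
  filter_upwards [hcompact, hincr] with n hnK hnT μ hμ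
  rcases le_total μ T with hμT | hTμ
  · exact hnK μ ⟨hμ, hμT⟩
  · exact (hnK T ⟨hT.le, le_rfl⟩).trans_le
      ((hconv n).le_right_of_left_le'' self_mem_Ici hμ hT hTμ hnT.le)

theorem tendsto_infSlope_of_monotone {G : ℕ → ℝ → ℝ} {g : ℝ → ℝ}
    (hconv : ∀ n, ConvexOn ℝ (Ici 0) (G n)) (hcont : ∀ n, ContinuousOn (G n) (Ici 0))
    (hmono : ∀ μ ∈ Ici (0:ℝ), Monotone (G · μ))
    (hlim : ∀ μ ∈ Ici (0:ℝ), Tendsto (G · μ) atTop (𝓝 (g μ))) (hG0 : 0 < G 0 0) :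
    Tendsto (fun n => infSlope (G n)) atTop (𝓝 (infSlope g)) := by
  obtain ⟨B, hB⟩ := (hconv 0).exists_forall_mul_le (hcont 0 0 self_mem_Ici) hG0
  have hGg : ∀ n, ∀ μ ∈ Ici (0:ℝ), G n μ ≤ g μ :=
    fun n μ hμ => (hmono μ hμ).ge_of_tendsto (hlim μ hμ) n
  have hBG : ∀ n, ∃ B, ∀ μ > 0, B * μ ≤ G n μ :=
    fun n => ⟨B, fun μ hμ => (hB μ hμ).trans (hmono μ hμ.le (Nat.zero_le n))⟩
  have hBg : ∃ B, ∀ μ > 0, B * μ ≤ g μ :=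
    ⟨B, fun μ hμ => (hB μ hμ).trans (hGg 0 μ hμ.le)⟩
  refine tendsto_order.2 ⟨fun a ha => ?_, fun a ha => Eventually.of_forall fun n =>
    (infSlope_mono (hBG n) fun μ hμ => hGg n μ hμ.le).trans_lt ha⟩
  obtain ⟨b, hab, hbc⟩ := exists_between ha
  have hgap : 0 < infSlope g - b := sub_pos.2 hbc
  have hgb : ∀ μ > 0, (infSlope g - b) * μ ≤ g μ - b * μ := fun μ hμ => by
    linarith [infSlope_mul_le hBg hμ]
  have hg0 : 0 < g 0 := hG0.trans_le (hGg 0 0 self_mem_Ici)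
  have hT : 0 < (g 0 + 1) / (infSlope g - b) := by positivity
  have hpos := ConvexOn.eventually_forall_pos_of_monotone (H := fun n μ => G n μ - b * μ)
    (h := fun μ => g μ - b * μ)
    (fun n => (hconv n).sub ((LinearMap.mulLeft ℝ b).concaveOn (convex_Ici 0)))
    (fun n => (hcont n).sub (continuousOn_const.mul continuousOn_id))
    (fun μ hμ m n hmn => sub_le_sub_right (hmono μ hμ hmn) _)
    (fun μ hμ => (hlim μ hμ).sub_const _) (fun μ hμ => ?_) hT ?_
  · filter_upwards [hpos] with n hn
    exact hab.trans_le <| (le_infSlope_iff (hBG n)).2 fun μ hμ => by linarith [hn μ hμ.le]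
  · rcases (mem_Ici.1 hμ).eq_or_lt with rfl | hμ
    · simpa using hg0
    · exact (mul_pos hgap hμ).trans_le (hgb μ hμ)
  · have := hgb _ hT
    rw [mul_div_cancel₀ _ hgap.ne'] at this
    simp only [mul_zero, sub_zero]
    linarith

theorem stmt_11_general (l : ℝ → ℝ) (ln : ℕ → ℝ → ℝ)
    (hC2n : ∀ n, ContDiffOn ℝ 2 (ln n) (Ici 0))
    (hpos : ∀ μ ∈ Ici (0:ℝ), 0 < l μ)
    (hposn : ∀ n, ∀ μ ∈ Ici (0:ℝ), 0 < ln n μ)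
    (h0n : ∀ n, 1 < ln n 0)
    (hconvn : ∀ n, ConvexOn ℝ (Ici 0) (fun μ => Real.log (ln n μ)))
    (hmono : ∀ n, ∀ μ ∈ Ici (0:ℝ), ln n μ ≤ ln (n + 1) μ)
    (hptwise : ∀ μ ∈ Ici (0:ℝ), Tendsto (fun n => ln n μ) atTop (nhds (l μ))) :
    Tendsto (fun n => sInf ((fun μ => Real.log (ln n μ) / μ) '' Ioi 0)) atTop
      (nhds (sInf ((fun μ => Real.log (l μ) / μ) '' Ioi 0))) :=
  tendsto_infSlope_of_monotone (G := fun n μ => Real.log (ln n μ)) hconvn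
    (fun n => (hC2n n).continuousOn.log fun μ hμ => (hposn n μ hμ).ne')
    (fun μ hμ => monotone_nat_of_le_succ fun n =>
      Real.log_le_log (hposn n μ hμ) (hmono n μ hμ))
    (fun μ hμ => (hptwise μ hμ).log (hpos μ hμ).ne') (Real.log_pos (h0n 0))

theorem stmt_11 (l : ℝ → ℝ) (ln : ℕ → ℝ → ℝ)
    (hC2 : ContDiffOn ℝ 2 l (Ici 0))
    (hC2n : ∀ n, ContDiffOn ℝ 2 (ln n) (Ici 0))
    (hpos : ∀ μ ∈ Ici (0:ℝ), 0 < l μ)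
    (hposn : ∀ n, ∀ μ ∈ Ici (0:ℝ), 0 < ln n μ)
    (h0 : 1 < l 0)
    (h0n : ∀ n, 1 < ln n 0)
    (hconv : ConvexOn ℝ (Ici 0) (fun μ => Real.log (l μ)))
    (hconvn : ∀ n, ConvexOn ℝ (Ici 0) (fun μ => Real.log (ln n μ)))
    (hmono : ∀ n, ∀ μ ∈ Ici (0:ℝ), ln n μ ≤ ln (n + 1) μ)
    (hle : ∀ n, ∀ μ ∈ Ici (0:ℝ), ln n μ ≤ l μ)
    (hptwise : ∀ μ ∈ Ici (0:ℝ), Tendsto (fun n => ln n μ) atTop (nhds (l μ)))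
    (hderiv : ∀ μ ∈ Ici (0:ℝ), Tendsto (fun n => deriv (ln n) μ) atTop (nhds (deriv l μ)))
    (hinf : Tendsto (fun μ => Real.log (l μ) / μ) atTop
      (nhds (sInf ((fun μ => Real.log (l μ) / μ) '' Ioi 0)))) :
    Tendsto (fun n => sInf ((fun μ => Real.log (ln n μ) / μ) '' Ioi 0)) atTop
      (nhds (sInf ((fun μ => Real.log (l μ) / μ) '' Ioi 0))) :=
  stmt_11_general l ln hC2n hpos hposn h0n hconvn hmono hptwise
end

section
/- Let α, a, β ≥ 0 with α + β > 0 and α + a + β > 1. Define h(μ) = a − 1 + α e^μ + β e^{−μ} for μ ∈ ℝ, Φ⁺(μ) = h(μ)/μ and Φ⁻(μ) = h(−μ)/μ for μ > 0, c₊* = inf_{μ>0} Φ⁺(μ) and c₋* = inf_{μ>0} Φ⁻(μ). Then c₊* + c₋* > 0. -/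
open Set Filter Real

lemma exp_quad_bound (μ : ℝ) (hμ : 0 < μ) : 1 + μ + μ^2/4 ≤ Real.exp μ := by
  have h1 : μ/2 + 1 ≤ Real.exp (μ/2) := Real.add_one_le_exp (μ/2)
  have h4 : (Real.exp (μ/2))^2 = Real.exp μ := by
    rw [sq, ← Real.exp_add]; ring_nf
  nlinarith [Real.exp_pos (μ/2)]

lemma phi_bound (α a β μ : ℝ) (hα : 0 ≤ α) (hβ : 0 ≤ β) (hμ : 0 < μ) :
    (α + a + β - 1)/μ + (α - β) + α*μ/4 ≤ (a - 1 + α * Real.exp μ + β * Real.exp (-μ))/μ := by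
  rw [div_add' _ _ _ (ne_of_gt hμ), div_add' _ _ _ (ne_of_gt hμ), div_le_div_iff₀ hμ hμ]
  have h1 : 1 + (-μ) ≤ Real.exp (-μ) := by linarith [Real.add_one_le_exp (-μ)]
  have h2 : 1 + μ + μ^2/4 ≤ Real.exp μ := exp_quad_bound μ hμ
  nlinarith [mul_le_mul_of_nonneg_left h1 hβ, mul_le_mul_of_nonneg_left h2 hα]

theorem stmt_12 (α a β : ℝ)
    (hα : 0 ≤ α) (ha : 0 ≤ a) (hβ : 0 ≤ β)
    (hαβ : 0 < α + β) (hK : 1 < α + a + β) :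
    0 < sInf ((fun μ => (a - 1 + α * exp μ + β * exp (-μ)) / μ) '' Ioi 0) +
        sInf ((fun μ => (a - 1 + α * exp (-μ) + β * exp μ) / μ) '' Ioi 0) := by
  set h0 := α + a + β - 1 with hh0
  have h0pos : 0 < h0 := by simp [hh0]; linarith
  set A := (fun μ => (a - 1 + α * exp μ + β * exp (-μ)) / μ) '' Ioi 0 with hA
  set B := (fun μ => (a - 1 + α * exp (-μ) + β * exp μ) / μ) '' Ioi 0 with hB
  have hAne : A.Nonempty := ⟨_, ⟨1, by norm_num, rfl⟩⟩
  have hBne : B.Nonempty := ⟨_, ⟨1, by norm_num, rfl⟩⟩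
  set ε := min (h0/2) ((α+β)/2) with hε
  have εpos : 0 < ε := lt_min (by linarith) (by linarith)
  have key : ∀ x ∈ A, ∀ y ∈ B, ε ≤ x + y := by
    rintro x ⟨μ, hμ, rfl⟩ y ⟨ν, hν, rfl⟩
    simp only [mem_Ioi] at hμ hν
    have bx : h0/μ + (α - β) + α*μ/4 ≤ (a - 1 + α * exp μ + β * exp (-μ))/μ :=
      phi_bound α a β μ hα hβ hμ
    have by' : h0/ν + (β - α) + β*ν/4 ≤ (a - 1 + α * exp (-ν) + β * exp ν)/ν := by
      have := phi_bound β a α ν hβ hα hν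
      have e1 : (β + a + α - 1) = h0 := by rw [hh0]; ring
      have e2 : (a - 1 + β * Real.exp ν + α * Real.exp (-ν)) =
          (a - 1 + α * Real.exp (-ν) + β * Real.exp ν) := by ring
      rw [e1, e2] at this
      exact this
    have hμ0 : 0 < h0/μ := div_pos h0pos hμ
    have hν0 : 0 < h0/ν := div_pos h0pos hν
    have hαμ : 0 ≤ α*μ/4 := by positivity
    have hβν : 0 ≤ β*ν/4 := by positivity
    rcases le_or_gt μ 2 with hm | hm
    · have : h0/2 ≤ h0/μ := div_le_div_of_nonneg_left (le_of_lt h0pos) hμ hm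
      have := min_le_left (h0/2) ((α+β)/2)
      linarith
    · rcases le_or_gt ν 2 with hn | hn
      · have : h0/2 ≤ h0/ν := div_le_div_of_nonneg_left (le_of_lt h0pos) hν hn
        have := min_le_left (h0/2) ((α+β)/2)
        linarith
      · have hq1 : α/2 ≤ α*μ/4 := by nlinarith
        have hq2 : β/2 ≤ β*ν/4 := by nlinarith
        have := min_le_right (h0/2) ((α+β)/2)
        linarith
  have h1 : ∀ y ∈ B, ε - y ≤ sInf A := fun y hy =>
    le_csInf hAne (fun x hx => by linarith [key x hx y hy])
  have h2 : ε - sInf A ≤ sInf B :=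
    le_csInf hBne (fun y hy => by linarith [h1 y hy])
  linarith
end

section
/- Let α, a, β ≥ 0 with α + β > 0, α + a + β > 1, and α > β. Then c₊* > c₋* and c₊* > 0, where c₊* = inf_{μ>0} (a−1+α e^μ+β e^{−μ})/μ and c₋* = inf_{μ>0} (a−1+α e^{−μ}+β e^{μ})/μ. -/
open Set Filter Real

theorem stmt_13 (α a β : ℝ)
    (hα : 0 ≤ α) (ha : 0 ≤ a) (hβ : 0 ≤ β)
    (hαβ : 0 < α + β) (hK : 1 < α + a + β) (hgt : β < α) :
    sInf ((fun μ => (a - 1 + α * exp (-μ) + β * exp μ) / μ) '' Ioi 0) <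
      sInf ((fun μ => (a - 1 + α * exp μ + β * exp (-μ)) / μ) '' Ioi 0) ∧
    0 < sInf ((fun μ => (a - 1 + α * exp μ + β * exp (-μ)) / μ) '' Ioi 0) := by
  set c := α - β with hc
  have hc0 : 0 < c := sub_pos.2 hgt
  set g : ℝ → ℝ := fun μ => (a - 1 + α * exp (-μ) + β * exp μ) / μ with hg
  set f : ℝ → ℝ := fun μ => (a - 1 + α * exp μ + β * exp (-μ)) / μ with hf
  -- pointwise lower bound for g
  have hglb : ∀ μ ∈ Ioi (0:ℝ), -c ≤ g μ := by
    intro μ hμ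
    have hμ0 : (0:ℝ) < μ := hμ
    have h1 : -μ + 1 ≤ exp (-μ) := add_one_le_exp _
    have h2 : μ + 1 ≤ exp μ := add_one_le_exp _
    rw [hg, le_div_iff₀ hμ0]
    nlinarith [mul_nonneg hα (sub_nonneg.2 h1), mul_nonneg hβ (sub_nonneg.2 h2)]
  -- pointwise comparison f ≥ g + 2c
  have hfg : ∀ μ ∈ Ioi (0:ℝ), g μ + 2 * c ≤ f μ := by
    intro μ hμ
    have hμ0 : (0:ℝ) < μ := hμ
    have hsinh : μ < Real.sinh μ := Real.self_lt_sinh_iff.2 hμ0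
    rw [Real.sinh_eq] at hsinh
    have hdiff : 2 * μ ≤ exp μ - exp (-μ) := by linarith
    have heq : f μ - g μ = c * (exp μ - exp (-μ)) / μ := by
      rw [hf, hg, hc]
      field_simp
      ring
    have : 2 * c ≤ c * (exp μ - exp (-μ)) / μ := by
      rw [le_div_iff₀ hμ0]
      nlinarith
    linarith
  have hne : ((1:ℝ)) ∈ Ioi (0:ℝ) := by norm_num
  have hneg : (g '' Ioi 0).Nonempty := ⟨g 1, ⟨1, hne, rfl⟩⟩
  have hnef : (f '' Ioi 0).Nonempty := ⟨f 1, ⟨1, hne, rfl⟩⟩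
  have hbddg : BddBelow (g '' Ioi 0) := by
    refine ⟨-c, ?_⟩
    rintro x ⟨μ, hμ, rfl⟩
    exact hglb μ hμ
  have hginf : -c ≤ sInf (g '' Ioi 0) := by
    apply le_csInf hneg
    rintro x ⟨μ, hμ, rfl⟩
    exact hglb μ hμ
  have hkey : sInf (g '' Ioi 0) + 2 * c ≤ sInf (f '' Ioi 0) := by
    apply le_csInf hnef
    rintro x ⟨μ, hμ, rfl⟩
    have h1 : sInf (g '' Ioi 0) ≤ g μ := csInf_le hbddg ⟨μ, hμ, rfl⟩
    have h2 := hfg μ hμ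
    linarith
  constructor
  · linarith
  · linarith
end

section
/- Let α, a, β with β > α > 0 and α + a + β > 1, a ≥ 0. Define c₊* = inf_{μ>0} (a−1+α e^μ+β e^{−μ})/μ. Then: c₊* > 0 if 2√(αβ) + a − 1 > 0; c₊* = 0 if 2√(αβ) + a − 1 = 0; and c₊* < 0 if 2√(αβ) + a − 1 < 0. -/
open Set Filter Real

theorem stmt_14 (α a β : ℝ)
    (hα : 0 < α) (ha : 0 ≤ a) (hβ : α < β) (hK : 1 < α + a + β) :
    (0 < 2 * Real.sqrt (α * β) + a - 1 →
      0 < sInf ((fun μ => (a - 1 + α * exp μ + β * exp (-μ)) / μ) '' Ioi 0)) ∧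
    (2 * Real.sqrt (α * β) + a - 1 = 0 →
      sInf ((fun μ => (a - 1 + α * exp μ + β * exp (-μ)) / μ) '' Ioi 0) = 0) ∧
    (2 * Real.sqrt (α * β) + a - 1 < 0 →
      sInf ((fun μ => (a - 1 + α * exp μ + β * exp (-μ)) / μ) '' Ioi 0) < 0) := by
  set s := Real.sqrt (α * β) with hs
  have hβ0 : 0 < β := lt_trans hα hβ
  have hs0 : 0 ≤ s := Real.sqrt_nonneg _
  -- AM-GM
  have hAM : ∀ μ : ℝ, 2 * s ≤ α * exp μ + β * exp (-μ) := by
    intro μ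
    have hp : 0 < exp μ := exp_pos μ
    have hrw : α * exp μ + β * exp (-μ) = (α * exp μ ^ 2 + β) / exp μ := by
      rw [Real.exp_neg]; field_simp
    rw [hrw, le_div_iff₀ hp]
    have h1 : Real.sqrt α ^ 2 = α := Real.sq_sqrt hα.le
    have h2 : Real.sqrt β ^ 2 = β := Real.sq_sqrt hβ0.le
    have h3 : s = Real.sqrt α * Real.sqrt β := Real.sqrt_mul hα.le β
    nlinarith [sq_nonneg (Real.sqrt α * exp μ - Real.sqrt β)]
  -- nonempty
  have hne : ((fun μ => (a - 1 + α * exp μ + β * exp (-μ)) / μ) '' Ioi 0).Nonempty :=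
    ⟨_, ⟨1, by norm_num, rfl⟩⟩
  -- lower bound -β
  have hlb : ∀ b ∈ ((fun μ => (a - 1 + α * exp μ + β * exp (-μ)) / μ) '' Ioi 0), -β ≤ b := by
    rintro b ⟨μ, hμ, rfl⟩
    have hμ : (0:ℝ) < μ := hμ
    rw [le_div_iff₀ hμ]
    have h1 : α * (μ + 1) ≤ α * exp μ :=
      mul_le_mul_of_nonneg_left (Real.add_one_le_exp μ) hα.le
    have h2 : β * (-μ + 1) ≤ β * exp (-μ) :=
      mul_le_mul_of_nonneg_left (Real.add_one_le_exp (-μ)) hβ0.le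
    nlinarith
  have hbdd : BddBelow ((fun μ => (a - 1 + α * exp μ + β * exp (-μ)) / μ) '' Ioi 0) :=
    ⟨-β, hlb⟩
  -- the minimizer μ₀
  set μ₀ := Real.log (β / α) / 2 with hμ₀def
  have hμ₀ : 0 < μ₀ := by
    have : 1 < β / α := (one_lt_div hα).mpr hβ
    have := Real.log_pos this
    positivity
  have hu2 : exp μ₀ ^ 2 = β / α := by
    rw [← Real.exp_log (show (0:ℝ) < β / α by positivity)]
    rw [sq, ← Real.exp_add]
    congr 1; rw [hμ₀def]; ring
  have hup : 0 < exp μ₀ := exp_pos _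
  have hsu : s * exp μ₀ = β := by
    have h1 : (s * exp μ₀) ^ 2 = β ^ 2 := by
      rw [mul_pow, Real.sq_sqrt (by positivity : (0:ℝ) ≤ α * β), hu2]
      field_simp
    have h2 : Real.sqrt ((s * exp μ₀) ^ 2) = Real.sqrt (β ^ 2) := by rw [h1]
    rwa [Real.sqrt_sq (by positivity), Real.sqrt_sq hβ0.le] at h2
  have hkey : α * exp μ₀ + β * exp (-μ₀) = 2 * s := by
    have hαu : α * exp μ₀ = s := by
      have hx : α * exp μ₀ * exp μ₀ = β := by
        rw [mul_assoc, ← sq, hu2, mul_div_cancel₀ _ hα.ne']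
      exact mul_right_cancel₀ hup.ne' (hx.trans hsu.symm)
    have hβu : β * exp (-μ₀) = s := by
      rw [Real.exp_neg, ← hsu]; field_simp [hup.ne']
    rw [hαu, hβu]; ring
  have hfμ₀ : (a - 1 + α * exp μ₀ + β * exp (-μ₀)) / μ₀ = (2 * s + a - 1) / μ₀ := by
    rw [show a - 1 + α * exp μ₀ + β * exp (-μ₀) = 2 * s + a - 1 by linarith [hkey]]
  have hmem : (2 * s + a - 1) / μ₀ ∈
      ((fun μ => (a - 1 + α * exp μ + β * exp (-μ)) / μ) '' Ioi 0) :=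
    ⟨μ₀, hμ₀, hfμ₀⟩
  refine ⟨?_, ?_, ?_⟩
  · -- positive case
    intro hm
    set m := 2 * s + a - 1 with hmdef
    set M := 4 / α + 4 with hMdef
    have hM : 0 < M := by positivity
    have hc : 0 < min (m / M) 1 := lt_min (div_pos hm hM) one_pos
    refine lt_of_lt_of_le hc (le_csInf hne ?_)
    rintro b ⟨μ, hμ, rfl⟩
    have hμ : (0:ℝ) < μ := hμ
    have hnum : m ≤ a - 1 + α * exp μ + β * exp (-μ) := by
      have := hAM μ; linarith
    rcases le_or_gt μ M with hcase | hcase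
    · refine le_trans (min_le_left _ _) ?_
      exact div_le_div₀ (by linarith) hnum hμ hcase
    · refine le_trans (min_le_right _ _) ?_
      rw [le_div_iff₀ hμ, one_mul]
      have hexp : 1 + μ + μ ^ 2 / 4 ≤ exp μ := by
        have h1 : 1 + μ / 2 ≤ exp (μ / 2) := by
          have := Real.add_one_le_exp (μ / 2); linarith
        have h2 : (1 + μ / 2) ^ 2 ≤ exp (μ / 2) ^ 2 := by
          have : 0 ≤ 1 + μ / 2 := by linarith
          nlinarith [exp_pos (μ / 2)]
        have h3 : exp (μ / 2) ^ 2 = exp μ := by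
          rw [sq, ← Real.exp_add]; congr 1; ring
        nlinarith
    -- need μ ≤ a - 1 + α*exp μ + β*exp(-μ)
      have h4 : 4 + 4 * α ≤ α * μ := by
        have h5 : α * M = 4 + 4 * α := by
          rw [hMdef]; field_simp
        have := mul_le_mul_of_nonneg_left hcase.le hα.le
        linarith
      have h6 : α * (1 + μ + μ ^ 2 / 4) ≤ α * exp μ :=
        mul_le_mul_of_nonneg_left hexp hα.le
      have h7 : 0 < β * exp (-μ) := by positivity
      nlinarith [mul_le_mul_of_nonneg_right h4 hμ.le]
  · -- zero case
    intro hm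
    refine le_antisymm ?_ ?_
    · have := csInf_le hbdd hmem
      rwa [hm, zero_div] at this
    · refine le_csInf hne ?_
      rintro b ⟨μ, hμ, rfl⟩
      have hμ : (0:ℝ) < μ := hμ
      have hnum : 0 ≤ a - 1 + α * exp μ + β * exp (-μ) := by
        have := hAM μ; linarith
      positivity
  · -- negative case
    intro hm
    refine lt_of_le_of_lt (csInf_le hbdd hmem) ?_
    exact div_neg_of_neg_of_pos hm hμ₀
end

section
/- Let α(s), a(s), β(s) be continuous, strictly increasing, nonnegative functions on [0,∞) with α(s) → α, a(s) → a, β(s) → β as s → 0⁺, where α, a, β ≥ 0, α + β > 0, and α + a + β = 1. Define c₊*(s) = inf_{μ>0} (a(s)−1+α(s) e^μ+β(s) e^{−μ})/μ for s > 0. Then lim_{s→0⁺} c₊*(s) = α − β. -/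
/-!
Monotonicity gives `α ≤ α(s)`, `a ≤ a(s)`, `β ≤ β(s)` for `s > 0`, and with `e^{±μ} ≥ 1 ± μ`
every quotient defining `c₊*(s)` is at least `α - β`. Conversely, since `α + a + β = 1` the
limiting quotient is a difference quotient at `μ = 0` and tends to `α - β` as `μ → 0⁺`; so for
`c > α - β` some fixed `μ` has limiting quotient below `c`, hence so does the quotient for `s`
near `0`, and `c₊*(s) < c`.
-/

open Set Filter Real Topology

theorem MonotoneOn.le_of_tendsto_nhdsGT {α β : Type*} [LinearOrder α] [TopologicalSpace α]
    [OrderTopology α] [DenselyOrdered α] [NoMaxOrder α] [Preorder β] [TopologicalSpace β]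
    [ClosedIicTopology β] {f : α → β} {x₀ s : α} {l : β} (hf : MonotoneOn f (Ioi x₀))
    (hl : Tendsto f (𝓝[>] x₀) (𝓝 l)) (hs : x₀ < s) : l ≤ f s := by
  refine le_of_tendsto hl ?_
  filter_upwards [Ioo_mem_nhdsGT hs] with t ht
  exact hf ht.1 hs ht.2.le

theorem tendsto_csInf_image {ι X : Type*} {l : Filter ι} {S : Set X} (hS : S.Nonempty)
    {F : ι → X → ℝ} {G : X → ℝ} {L : ℝ} (hlow : ∀ᶠ s in l, ∀ μ ∈ S, L ≤ F s μ)
    (hG : ∀ μ ∈ S, Tendsto (F · μ) l (𝓝 (G μ))) (hGL : ∀ c > L, ∃ μ ∈ S, G μ < c) :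
    Tendsto (fun s => sInf (F s '' S)) l (𝓝 L) := by
  rw [tendsto_order]
  constructor
  · intro c hc
    filter_upwards [hlow] with s hs
    exact hc.trans_le (le_csInf (hS.image _) (forall_mem_image.2 hs))
  · intro c hc
    obtain ⟨μ, hμ, hGc⟩ := hGL c hc
    filter_upwards [(hG μ hμ).eventually (gt_mem_nhds hGc), hlow] with s hsc hs
    exact (csInf_le ⟨L, forall_mem_image.2 hs⟩ (mem_image_of_mem _ hμ)).trans_lt hsc

noncomputable def speedQuotient (α a β μ : ℝ) : ℝ := (a - 1 + α * exp μ + β * exp (-μ)) / μ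

theorem speedQuotient_mono {α a β α' a' β' μ : ℝ} (hα : α ≤ α') (ha : a ≤ a') (hβ : β ≤ β')
    (hμ : 0 < μ) : speedQuotient α a β μ ≤ speedQuotient α' a' β' μ := by
  unfold speedQuotient
  gcongr

theorem sub_le_speedQuotient {α a β μ : ℝ} (hα : 0 ≤ α) (hβ : 0 ≤ β) (hsum : α + a + β = 1)
    (hμ : 0 < μ) : α - β ≤ speedQuotient α a β μ := by
  rw [speedQuotient, le_div_iff₀ hμ]
  have hexp : μ + 1 ≤ exp μ := add_one_le_exp μ
  have hexp_neg : -μ + 1 ≤ exp (-μ) := add_one_le_exp (-μ)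
  nlinarith [mul_le_mul_of_nonneg_left hexp hα, mul_le_mul_of_nonneg_left hexp_neg hβ]

/-- When `α + a + β = 1` the numerator vanishes at `μ = 0`, so the quotient is a difference
quotient and tends to the derivative `α - β`. -/
theorem tendsto_speedQuotient_nhdsGT_zero {α a β : ℝ} (hsum : α + a + β = 1) :
    Tendsto (speedQuotient α a β) (𝓝[>] 0) (𝓝 (α - β)) := by
  set g : ℝ → ℝ := fun μ => a - 1 + α * exp μ + β * exp (-μ)
  have hg : HasDerivAt g (α - β) 0 := by
    have h := (((hasDerivAt_exp 0).const_mul α).const_add (a - 1)).add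
      (((hasDerivAt_neg (0 : ℝ)).exp).const_mul β)
    exact h.congr_deriv (by simp [sub_eq_add_neg])
  have hslope : slope g 0 = speedQuotient α a β := by
    ext μ
    simp only [slope_def_field, g, speedQuotient, exp_zero, neg_zero, sub_zero]
    rw [show a - 1 + α * 1 + β * 1 = 0 by linarith, sub_zero]
  rw [← hslope]
  exact (hasDerivAt_iff_tendsto_slope.mp hg).mono_left (nhdsWithin_mono _ fun _ h => ne_of_gt h)

theorem tendsto_speedQuotient {ι : Type*} {l : Filter ι} {αf af βf : ι → ℝ} {α a β : ℝ}
    (hα : Tendsto αf l (𝓝 α)) (ha : Tendsto af l (𝓝 a)) (hβ : Tendsto βf l (𝓝 β)) (μ : ℝ) :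
    Tendsto (fun s => speedQuotient (αf s) (af s) (βf s) μ) l (𝓝 (speedQuotient α a β μ)) :=
  (((ha.sub_const 1).add (hα.mul_const _)).add (hβ.mul_const _)).div_const μ

theorem stmt_17_general (αf af βf : ℝ → ℝ) (α a β : ℝ)
    (hmα : StrictMonoOn αf (Ici 0)) (hma : StrictMonoOn af (Ici 0))
    (hmβ : StrictMonoOn βf (Ici 0))
    (hlα : Tendsto αf (nhdsWithin 0 (Ioi 0)) (nhds α))
    (hla : Tendsto af (nhdsWithin 0 (Ioi 0)) (nhds a))
    (hlβ : Tendsto βf (nhdsWithin 0 (Ioi 0)) (nhds β))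
    (hα : 0 ≤ α) (hβ : 0 ≤ β)
    (hsum : α + a + β = 1) :
    Tendsto
      (fun s => sInf ((fun μ => (af s - 1 + αf s * exp μ + βf s * exp (-μ)) / μ) '' Ioi 0))
      (nhdsWithin 0 (Ioi 0)) (nhds (α - β)) := by
  have hbelow {f : ℝ → ℝ} {l : ℝ} (hf : StrictMonoOn f (Ici 0))
      (hl : Tendsto f (𝓝[>] 0) (𝓝 l)) {s : ℝ} (hs : 0 < s) : l ≤ f s :=
    (hf.monotoneOn.mono Ioi_subset_Ici_self).le_of_tendsto_nhdsGT hl hs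
  refine tendsto_csInf_image (F := fun s => speedQuotient (αf s) (af s) (βf s)) nonempty_Ioi
    ?_ (fun μ _ => tendsto_speedQuotient hlα hla hlβ μ) fun c hc => ?_
  · filter_upwards [self_mem_nhdsWithin] with s hs μ hμ
    exact (sub_le_speedQuotient hα hβ hsum hμ).trans <|
      speedQuotient_mono (hbelow hmα hlα hs) (hbelow hma hla hs) (hbelow hmβ hlβ hs) hμ
  · obtain ⟨μ, hμc, hμ⟩ :=
      (((tendsto_speedQuotient_nhdsGT_zero hsum).eventually (gt_mem_nhds hc)).and
        self_mem_nhdsWithin).exists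
    exact ⟨μ, hμ, hμc⟩

theorem stmt_17 (αf af βf : ℝ → ℝ) (α a β : ℝ)
    (hcα : ContinuousOn αf (Ici 0)) (hca : ContinuousOn af (Ici 0))
    (hcβ : ContinuousOn βf (Ici 0))
    (hmα : StrictMonoOn αf (Ici 0)) (hma : StrictMonoOn af (Ici 0))
    (hmβ : StrictMonoOn βf (Ici 0))
    (hnα : ∀ s ∈ Ici (0:ℝ), 0 ≤ αf s) (hna : ∀ s ∈ Ici (0:ℝ), 0 ≤ af s)
    (hnβ : ∀ s ∈ Ici (0:ℝ), 0 ≤ βf s)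
    (hlα : Tendsto αf (nhdsWithin 0 (Ioi 0)) (nhds α))
    (hla : Tendsto af (nhdsWithin 0 (Ioi 0)) (nhds a))
    (hlβ : Tendsto βf (nhdsWithin 0 (Ioi 0)) (nhds β))
    (hα : 0 ≤ α) (ha : 0 ≤ a) (hβ : 0 ≤ β)
    (hαβ : 0 < α + β) (hsum : α + a + β = 1) :
    Tendsto
      (fun s => sInf ((fun μ => (af s - 1 + αf s * exp μ + βf s * exp (-μ)) / μ) '' Ioi 0))
      (nhdsWithin 0 (Ioi 0)) (nhds (α - β)) :=
  stmt_17_general αf af βf α a β hmα hma hmβ hlα hla hlβ hα hβ hsum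
end
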